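/- arXiv:1510.05942 — 4 statements merged into one kernel-verified Lean document; each statement's English description precedes it below -/
import Mathlib

section
/- Let g : E_k^n → E_k be a function with decrease d(g) ≤ D, and let C = (α_1, ..., α_r) be a chain in E_k^n. Then the sequence of (n+1)-tuples (g(α_1), α_1), ..., (g(α_r), α_r) in E_k^{n+1} can be partitioned into at most D + 1 contiguous blocks, each of which is a chain in E_k^{n+1}. -/
/-- A chain in `E_k^n`: pairwise distinct tuples increasing coordinatewise,
    i.e. strictly increasing in the coordinatewise (product) order. -/
def IsChainE {n k : ℕ} (C : List (Fin n → Fin k)) : Prop :=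
  C.Chain' (· < ·)

/-- The decrease `d_C(f)` of `f` over a chain `C`: number of consecutive
    pairs on which `f` strictly decreases. -/
def decC {n k : ℕ} (f : (Fin n → Fin k) → Fin k) (C : List (Fin n → Fin k)) : ℕ :=
  (C.zip C.tail).countP (fun p => decide (f p.2 < f p.1))

/-- The decrease `d(f)` of `f`: maximum of `d_C(f)` over all chains `C`. -/
noncomputable def dF {n k : ℕ} (f : (Fin n → Fin k) → Fin k) : ℕ :=
  sSup {m : ℕ | ∃ C : List (Fin n → Fin k), IsChainE C ∧ decC f C = m}

/-!
Cut the lifted sequence `(g(α_i), α_i)` exactly between those consecutive terms that are not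
comparable. Since `α_i < α_{i+1}`, the lifted terms fail to be comparable only when
`g(α_{i+1}) < g(α_i)`, so there are at most `d_C(g) ≤ d(g) ≤ D` cuts.
-/

namespace List

variable {α : Type*}

theorem IsChain.rel_of_mem_zip_tail {r : α → α → Prop} :
    ∀ {l : List α}, l.IsChain r → ∀ p ∈ l.zip l.tail, r p.1 p.2
  | [], _, _, hp => by simp at hp
  | [_], _, _, hp => by simp at hp
  | a :: b :: l, h, p, hp => by
    rw [isChain_cons_cons] at h
    rcases mem_cons.1 hp with rfl | hp
    · exact h.1
    · exact h.2.rel_of_mem_zip_tail p hp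

theorem exists_isChain_blocks_cons (r : α → α → Prop) [DecidableRel r] (a : α) (l : List α) :
    ∃ (B : List α) (L : List (List α)), (B :: L).flatten = a :: l ∧ B.head? = some a ∧
      (B :: L).length ≤ ((a :: l).zip l).countP (fun p => ¬ r p.1 p.2) + 1 ∧
      ∀ X ∈ B :: L, X.IsChain r := by
  induction l generalizing a with
  | nil => exact ⟨[a], [], rfl, rfl, by simp, by simp⟩
  | cons b t ih =>
    obtain ⟨B, L, hflat, hhead, hlen, hchain⟩ := ih b
    by_cases hab : r a b
    · refine ⟨a :: B, L, by simpa using hflat, rfl, by simpa [hab] using hlen, ?_⟩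
      rintro X (_ | ⟨_, hX⟩)
      · exact (hchain B mem_cons_self).cons (by simpa [hhead] using hab)
      · exact hchain X (mem_cons_of_mem _ hX)
    · refine ⟨[a], B :: L, by simpa using hflat, rfl, ?_, ?_⟩
      · simp only [zip_cons_cons, countP_cons, hab, length_cons, not_false_eq_true, decide_true,
          if_true] at hlen ⊢
        omega
      · rintro X (_ | ⟨_, hX⟩)
        · exact isChain_singleton a
        · exact hchain X hX

theorem exists_isChain_blocks (r : α → α → Prop) [DecidableRel r] (l : List α) :
    ∃ L : List (List α), L.flatten = l ∧
      L.length ≤ (l.zip l.tail).countP (fun p => ¬ r p.1 p.2) + 1 ∧ ∀ B ∈ L, B.IsChain r := by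
  cases l with
  | nil => exact ⟨[], rfl, by simp, by simp⟩
  | cons a l =>
    obtain ⟨B, L, hflat, -, hlen, hchain⟩ := exists_isChain_blocks_cons r a l
    exact ⟨B :: L, hflat, hlen, hchain⟩

end List

theorem Fin.cons_lt_cons_of_le_of_lt {n : ℕ} {α : Fin (n + 1) → Type*} [∀ i, Preorder (α i)]
    {x₀ y₀ : α 0} {x y : ∀ i : Fin n, α i.succ} (h₀ : x₀ ≤ y₀) (h : x < y) :
    Fin.cons x₀ x < (Fin.cons y₀ y : ∀ i, α i) :=
  lt_of_le_not_ge (Fin.cons_le_cons.2 ⟨h₀, h.le⟩) fun h' ↦ h.not_ge (Fin.cons_le_cons.1 h').2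

theorem decC_le_dF {n k : ℕ} (f : (Fin n → Fin k) → Fin k) {C : List (Fin n → Fin k)}
    (hC : IsChainE C) : decC f C ≤ dF f := by
  refine le_csSup ⟨Fintype.card (Fin n → Fin k), ?_⟩ ⟨C, hC, rfl⟩
  rintro m ⟨C', hC', rfl⟩
  have hnodup : C'.Nodup := (List.isChain_iff_pairwise.1 hC').imp ne_of_lt
  calc decC f C' ≤ (C'.zip C'.tail).length := List.countP_le_length
    _ ≤ C'.length := by simp
    _ ≤ Fintype.card (Fin n → Fin k) := hnodup.length_le_card

open scoped Classical in
theorem countP_not_cons_lt_cons_le_decC {n k : ℕ} (g : (Fin n → Fin k) → Fin k)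
    {C : List (Fin n → Fin k)} (hC : IsChainE C) :
    (C.zip C.tail).countP
      (fun p ↦ decide ¬ (Fin.cons (g p.1) p.1 : Fin (n + 1) → Fin k) < Fin.cons (g p.2) p.2) ≤
      decC g C := by
  refine List.countP_mono_left fun p hp hnlt ↦ ?_
  simp only [decide_eq_true_eq] at hnlt ⊢
  by_contra! hle
  exact hnlt (Fin.cons_lt_cons_of_le_of_lt hle (List.IsChain.rel_of_mem_zip_tail hC p hp))

/-- If `d(g) ≤ D` and `C` is a chain in `E_k^n`, then the lifted sequence
    `(g(α), α)` in `E_k^{n+1}` splits into at most `D + 1` contiguous blocks,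
    each a chain in `E_k^{n+1}`. -/
theorem stmt6 {n k D : ℕ} (g : (Fin n → Fin k) → Fin k) (hg : dF g ≤ D)
    (C : List (Fin n → Fin k)) (hC : IsChainE C) :
    ∃ L : List (List (Fin (n + 1) → Fin k)),
      L.flatten = C.map (fun α => Fin.cons (g α) α) ∧
      L.length ≤ D + 1 ∧ ∀ B ∈ L, IsChainE B := by
  classical
  let lift : (Fin n → Fin k) → Fin (n + 1) → Fin k := fun α ↦ Fin.cons (g α) α
  obtain ⟨L, hflat, hlen, hchain⟩ := List.exists_isChain_blocks (fun α β ↦ lift α < lift β) C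
  refine ⟨L.map (List.map lift), by rw [← List.map_flatten, hflat], ?_, ?_⟩
  · calc (L.map (List.map lift)).length = L.length := List.length_map _
      _ ≤ decC g C + 1 := by grw [hlen, countP_not_cons_lt_cons_le_decC g hC]
      _ ≤ D + 1 := by grw [decC_le_dF g hC, hg]
  · simp only [List.forall_mem_map]
    exact fun B hB ↦ (List.isChain_map lift).2 (hchain B hB)
end

section
/- For every n ≥ 1 and k ≥ 2, every function f : E_k^n → E_k satisfies d(f) ≤ (k-2)n + ⌈n/k⌉. -/
namespace List

section Descents

variable {α : Type*} [LT α] [DecidableLT α]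

def descentCount (l : List α) : ℕ :=
  (l.zip l.tail).countP (fun p => decide (p.2 < p.1))

@[simp]
theorem descentCount_nil : descentCount ([] : List α) = 0 := rfl

@[simp]
theorem descentCount_singleton (a : α) : descentCount [a] = 0 := rfl

theorem descentCount_cons_cons (a b : α) (l : List α) :
    descentCount (a :: b :: l) = descentCount (b :: l) + if b < a then 1 else 0 := by
  simp [descentCount, countP_cons]

end Descents

theorem mul_descentCount_cons_le {k : ℕ} (a : Fin k) (l : List (Fin k)) :
    k * descentCount (a :: l) ≤ (k - 1) * l.length + a := by
  induction l generalizing a with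
  | nil => simp
  | cons b l ih =>
    have hIH := ih b
    have hb := b.isLt
    rw [descentCount_cons_cons, length_cons]
    split_ifs with hba
    · have : (b : ℕ) < a := hba
      grind
    · grind

theorem mul_descentCount_le {k : ℕ} (l : List (Fin k)) :
    k * descentCount l ≤ (k - 1) * l.length := by
  cases l with
  | nil => simp
  | cons a l =>
    have hcons := mul_descentCount_cons_le a l
    have ha := a.isLt
    rw [length_cons]
    grind

theorem length_le_of_isChain_lt_of_strictMono {α : Type*} [Preorder α] {g : α → ℕ}
    (hg : StrictMono g) {N : ℕ} (hN : ∀ a, g a ≤ N) {l : List α} (hl : l.IsChain (· < ·)) :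
    l.length ≤ N + 1 := by
  have hmap : (l.map g).Pairwise (· < ·) :=
    ((isChain_map g).2 (hl.imp fun _ _ h => hg h)).pairwise
  have hsub : l.map g ⊆ range (N + 1) := by
    simp only [subset_def, mem_map, mem_range]
    rintro _ ⟨a, -, rfl⟩
    exact Nat.lt_succ_of_le (hN a)
  simpa using hmap.nodup.subperm hsub |>.length_le

end List

section Chains

variable {n k : ℕ}

theorem sum_val_le (α : Fin n → Fin k) : ∑ i, (α i : ℕ) ≤ (k - 1) * n := by
  calc ∑ i, (α i : ℕ) ≤ ∑ _i : Fin n, (k - 1) :=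
        Finset.sum_le_sum fun i _ => Nat.le_sub_one_of_lt (α i).isLt
    _ = (k - 1) * n := by simp [mul_comm]

theorem strictMono_sum_val : StrictMono fun α : Fin n → Fin k => ∑ i, (α i : ℕ) := by
  intro α β h
  obtain ⟨hle, i, hlt⟩ := Pi.lt_def.mp h
  exact Fintype.sum_strictMono (Pi.lt_def.mpr ⟨fun j => hle j, i, hlt⟩)

theorem IsChainE.length_le {C : List (Fin n → Fin k)} (hC : IsChainE C) :
    C.length ≤ (k - 1) * n + 1 :=
  List.length_le_of_isChain_lt_of_strictMono strictMono_sum_val sum_val_le hC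

theorem decC_eq_descentCount (f : (Fin n → Fin k) → Fin k) (C : List (Fin n → Fin k)) :
    decC f C = (C.map f).descentCount := by
  rw [decC, List.descentCount, ← List.map_tail, List.zip_map, List.countP_map]
  rfl

theorem IsChainE.mul_decC_le (f : (Fin n → Fin k) → Fin k) {C : List (Fin n → Fin k)}
    (hC : IsChainE C) : k * decC f C ≤ (k - 1) * ((k - 1) * n + 1) :=
  calc k * decC f C ≤ (k - 1) * C.length := by
        simpa [decC_eq_descentCount] using (C.map f).mul_descentCount_le
    _ ≤ (k - 1) * ((k - 1) * n + 1) := Nat.mul_le_mul_left _ hC.length_le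

end Chains

theorem stmt11_general {n k : ℕ} (hk : 2 ≤ k)
    (f : (Fin n → Fin k) → Fin k) :
    dF f ≤ (k - 2) * n + (n + k - 1) / k := by
  have hk0 : 0 < k := by omega
  have hexpand : (k - 1) * ((k - 1) * n + 1) = k * ((k - 2) * n) + (n + k - 1) := by
    obtain ⟨j, rfl⟩ := Nat.exists_eq_add_of_le' hk
    simp only [Nat.add_sub_cancel, Nat.add_succ_sub_one]
    ring
  refine csSup_le ⟨0, [], List.isChain_nil, rfl⟩ ?_
  rintro _ ⟨C, hC, rfl⟩
  rw [← Nat.mul_add_div hk0, Nat.le_div_iff_mul_le hk0, mul_comm, ← hexpand]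
  exact hC.mul_decC_le f

/-- For `n ≥ 1`, `k ≥ 2`, every `f : E_k^n → E_k` satisfies
    `d(f) ≤ (k-2)n + ⌈n/k⌉`. -/
theorem stmt11 {n k : ℕ} (hn : 1 ≤ n) (hk : 2 ≤ k)
    (f : (Fin n → Fin k) → Fin k) :
    dF f ≤ (k - 2) * n + (n + k - 1) / k :=
  stmt11_general hk f
end

section
/- Let T_1, ..., T_s be defined from a system F as in the layered decomposition (T_i collects tuples all of whose chains within the remaining set have small decrease). Then the sets T_1, ..., T_s partition E_k^n and are downward-consistent: if α ∈ T_i and β < α coordinatewise (β ≠ α), then β ∈ T_1 ∪ ... ∪ T_i. In particular, each indicator function μ_i(x) = 0 for x ∈ T_1 ∪ ... ∪ T_{i-1} and μ_i(x) = 1 for x ∈ T_i ∪ ... ∪ T_s is monotone. -/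
/-- Decrease of a system `F` over a chain: number of consecutive pairs that are
    jumps for every function of `F`. -/
def decCS {n k : ℕ} (F : Finset ((Fin n → Fin k) → Fin k)) (C : List (Fin n → Fin k)) : ℕ :=
  (C.zip C.tail).countP (fun p => decide (∀ f ∈ F, f p.2 < f p.1))

/-- Decrease `d(F)` of a system of functions. -/
noncomputable def dSysF {n k : ℕ} (F : Finset ((Fin n → Fin k) → Fin k)) : ℕ :=
  sSup {m : ℕ | ∃ C : List (Fin n → Fin k), IsChainE C ∧ decCS F C = m}

/-!
The layers are disjoint because a tuple of `T i` lies in no earlier layer, and they cover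
because the last layer takes everything left over. For downward consistency let `β < α` with
`α ∈ T i` but `β` in no `T j`, `j ≤ i`: then some chain avoiding the earlier layers ends at `β`
with decrease at least `t`; appending `α` yields such a chain ending at `α`, and appending a
tuple never lowers the decrease. So every union `T 0 ∪ ... ∪ T (i-1)` is a lower set, and a
`0/1`-valued function vanishing exactly on a lower set is monotone.
-/

lemma List.countP_zip_tail_le_append_singleton {X : Type*} (p : X × X → Bool) (a : X) :
    ∀ l : List X, (l.zip l.tail).countP p ≤ ((l ++ [a]).zip (l ++ [a]).tail).countP p
  | [] | [_] => by simp
  | x :: y :: l => by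
    have ih := countP_zip_tail_le_append_singleton p a (y :: l)
    simp only [List.cons_append, List.tail_cons, List.zip_cons_cons, List.countP_cons] at ih ⊢
    omega

lemma decCS_le_decCS_append_singleton {n k : ℕ} (F : Finset ((Fin n → Fin k) → Fin k))
    (C : List (Fin n → Fin k)) (a : Fin n → Fin k) : decCS F C ≤ decCS F (C ++ [a]) :=
  List.countP_zip_tail_le_append_singleton _ a C

lemma IsChainE.append_singleton {n k : ℕ} {C : List (Fin n → Fin k)} {β α : Fin n → Fin k}
    (hC : IsChainE C) (hlast : C.getLast? = some β) (hβα : β < α) : IsChainE (C ++ [α]) :=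
  List.IsChain.append hC (List.isChain_singleton α) (by simp_all)

lemma Fin.monotone_of_isLowerSet {X : Type*} [Preorder X] {k : ℕ} {D : Set X}
    (hD : IsLowerSet D) (μ : X → Fin k) (h0 : ∀ x ∈ D, (μ x).val = 0)
    (h1 : ∀ x ∉ D, (μ x).val = 1) : Monotone μ := by
  intro x y hxy
  rw [Fin.le_iff_val_le_val]
  by_cases hy : y ∈ D
  · rw [h0 x (hD hxy hy), h0 y hy]
  · rw [h1 y hy]
    by_cases hx : x ∈ D
    · rw [h0 x hx]; exact zero_le_one
    · rw [h1 x hx]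

section Layers

variable {X : Type*} {s : ℕ} {T : ℕ → Set X}

lemma exists_lt_mem_of_mem_last_iff (hs : 0 < s)
    (hTs : ∀ α, α ∈ T (s - 1) ↔ ∀ j < s - 1, α ∉ T j) (α : X) : ∃ i < s, α ∈ T i := by
  by_cases h : ∃ j < s - 1, α ∈ T j
  · obtain ⟨j, hj, hα⟩ := h
    exact ⟨j, by omega, hα⟩
  · push Not at h
    exact ⟨s - 1, by omega, (hTs α).2 h⟩

lemma eq_of_mem_of_mem_of_not_mem_lower (hlow : ∀ i < s, ∀ α ∈ T i, ∀ j < i, α ∉ T j)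
    {α : X} {i i' : ℕ} (hi : i < s) (hi' : i' < s) (hα : α ∈ T i) (hα' : α ∈ T i') :
    i = i' :=
  le_antisymm (not_lt.1 fun h => hlow i hi α hα i' h hα')
    (not_lt.1 fun h => hlow i' hi' α hα' i h hα)

lemma isLowerSet_setOf_exists_lt_mem [Preorder X]
    (hdown : ∀ i < s, ∀ α ∈ T i, ∀ β, β ≤ α → β ≠ α → ∃ j ≤ i, β ∈ T j) {i : ℕ}
    (hi : i ≤ s) : IsLowerSet {x | ∃ j < i, x ∈ T j} := by
  rintro α β hβα ⟨j, hj, hα⟩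
  rcases eq_or_ne β α with rfl | hne
  · exact ⟨j, hj, hα⟩
  · obtain ⟨j', hj', hβ⟩ := hdown j (by omega) α hα β hβα hne
    exact ⟨j', by omega, hβ⟩

end Layers

lemma exists_le_mem_of_lt {n k t i : ℕ} {F : Finset ((Fin n → Fin k) → Fin k)}
    {T : ℕ → Set (Fin n → Fin k)}
    (hTi : ∀ α, α ∈ T i ↔
      ((∀ j < i, α ∉ T j) ∧
       ∀ C : List (Fin n → Fin k), IsChainE C → (∀ β ∈ C, ∀ j < i, β ∉ T j) →
         C.getLast? = some α → decCS F C < t))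
    {α β : Fin n → Fin k} (hα : α ∈ T i) (hβα : β < α) : ∃ j ≤ i, β ∈ T j := by
  by_contra! hβ
  obtain ⟨hα_low, hα_small⟩ := (hTi α).1 hα
  have hβ_low : ∀ j < i, β ∉ T j := fun j hj => hβ j hj.le
  obtain ⟨C, hC, hC_low, hC_last, hC_large⟩ : ∃ C : List (Fin n → Fin k), IsChainE C ∧
      (∀ γ ∈ C, ∀ j < i, γ ∉ T j) ∧ C.getLast? = some β ∧ t ≤ decCS F C := by
    have hβ_notin := hβ i le_rfl
    simp only [hTi β, not_and, not_forall, not_lt, exists_prop] at hβ_notin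
    exact hβ_notin hβ_low
  have hCα_low : ∀ γ ∈ C ++ [α], ∀ j < i, γ ∉ T j := by
    simpa [or_imp, forall_and] using ⟨hC_low, hα_low⟩
  have := hα_small _ (hC.append_singleton hC_last hβα) hCα_low (by simp)
  have := decCS_le_decCS_append_singleton F C α
  omega

theorem stmt17_general {n k s t : ℕ} (hs : 2 ≤ s)
    (F : Finset ((Fin n → Fin k) → Fin k))
    (T : ℕ → Set (Fin n → Fin k))
    (hT : ∀ i < s - 1, ∀ α, α ∈ T i ↔
      ((∀ j < i, α ∉ T j) ∧
       ∀ C : List (Fin n → Fin k), IsChainE C → (∀ β ∈ C, ∀ j < i, β ∉ T j) →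
         C.getLast? = some α → decCS F C < t))
    (hTs : ∀ α, α ∈ T (s - 1) ↔ ∀ j < s - 1, α ∉ T j) :
    (∀ α : Fin n → Fin k, ∃! i, i < s ∧ α ∈ T i) ∧
    (∀ i < s, ∀ α ∈ T i, ∀ β : Fin n → Fin k, β ≤ α → β ≠ α → ∃ j ≤ i, β ∈ T j) ∧
    (∀ i < s, ∀ μ : (Fin n → Fin k) → Fin k,
      (∀ x, (∃ j < i, x ∈ T j) → (μ x).val = 0) →
      (∀ x, ¬ (∃ j < i, x ∈ T j) → (μ x).val = 1) →
      Monotone μ) := by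
  have hcover := exists_lt_mem_of_mem_last_iff (by omega) hTs
  have hlow : ∀ i < s, ∀ α ∈ T i, ∀ j < i, α ∉ T j := by
    intro i hi α hα
    rcases (Nat.le_sub_one_of_lt hi).lt_or_eq with hi' | rfl
    · exact ((hT i hi' α).1 hα).1
    · exact (hTs α).1 hα
  have hdown : ∀ i < s, ∀ α ∈ T i, ∀ β, β ≤ α → β ≠ α → ∃ j ≤ i, β ∈ T j := by
    intro i hi α hα β hβα hne
    rcases (Nat.le_sub_one_of_lt hi).lt_or_eq with hi' | rfl
    · exact exists_le_mem_of_lt (hT i hi') hα (lt_of_le_of_ne hβα hne)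
    · obtain ⟨j, hj, hβ⟩ := hcover β
      exact ⟨j, by omega, hβ⟩
  refine ⟨fun α => ?_, hdown, fun i hi μ h0 h1 => ?_⟩
  · obtain ⟨i, hi, hα⟩ := hcover α
    exact ⟨i, ⟨hi, hα⟩, fun i' ⟨hi', hα'⟩ =>
      eq_of_mem_of_mem_of_not_mem_lower hlow hi' hi hα' hα⟩
  · exact Fin.monotone_of_isLowerSet (isLowerSet_setOf_exists_lt_mem hdown hi.le) μ h0 h1

/-- The layers `T 0, ..., T (s-1)` (representing `T_1, ..., T_s`) partition
    `E_k^n` and are downward-consistent: if `α ∈ T i` and `β ≤ α`, `β ≠ α`,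
    then `β ∈ T 0 ∪ ... ∪ T i`.  In particular each 0/1-valued indicator
    `μ_i` (value `0` on `T 0 ∪ ... ∪ T (i-1)`, value `1` on
    `T i ∪ ... ∪ T (s-1)`) is monotone. -/
theorem stmt17 {n k s t : ℕ} (hk : 2 ≤ k) (hs : 2 ≤ s) (ht : 1 ≤ t)
    (F : Finset ((Fin n → Fin k) → Fin k))
    (T : ℕ → Set (Fin n → Fin k))
    (hT : ∀ i < s - 1, ∀ α, α ∈ T i ↔
      ((∀ j < i, α ∉ T j) ∧
       ∀ C : List (Fin n → Fin k), IsChainE C → (∀ β ∈ C, ∀ j < i, β ∉ T j) →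
         C.getLast? = some α → decCS F C < t))
    (hTs : ∀ α, α ∈ T (s - 1) ↔ ∀ j < s - 1, α ∉ T j) :
    (∀ α : Fin n → Fin k, ∃! i, i < s ∧ α ∈ T i) ∧
    (∀ i < s, ∀ α ∈ T i, ∀ β : Fin n → Fin k, β ≤ α → β ≠ α → ∃ j ≤ i, β ∈ T j) ∧
    (∀ i < s, ∀ μ : (Fin n → Fin k) → Fin k,
      (∀ x, (∃ j < i, x ∈ T j) → (μ x).val = 0) →
      (∀ x, ¬ (∃ j < i, x ∈ T j) → (μ x).val = 1) →
      Monotone μ) :=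
  stmt17_general hs F T hT hTs
end

section
/- For k ≥ 2 and any function f : E_k^n → E_k, define f_i (for 1 ≤ i ≤ s) by f_i(x) = 0 if x ∈ T_1 ∪ ... ∪ T_{i-1}, f_i(x) = f(x) if x ∈ T_i, and f_i(x) = k-1 if x ∈ T_{i+1} ∪ ... ∪ T_s, where T_1, ..., T_s is a partition of E_k^n that is downward-closed in cumulative unions (i.e., each T_1 ∪ ... ∪ T_i is a down-set) and such that every chain contained in a single T_i has d_C(f) < t. Then d(f_i) ≤ t - 1 for every i. -/
/-!
A descent of `fᵢ` along a chain can only occur between two elements of the layer `T i`: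
since the cumulative unions are down-sets, the layer index is monotone along chains, and
`fᵢ` is `0` (its minimum) before layer `i` and `k - 1` (its maximum) after it. Deleting
from a chain the elements outside `T i` therefore keeps every descent of `fᵢ` as a descent
of `f` along a chain inside `T i`, of which there are fewer than `t`.
-/

section Decrease

variable {n k : ℕ}

theorem decC_cons_cons (g : (Fin n → Fin k) → Fin k) (x y : Fin n → Fin k)
    (L : List (Fin n → Fin k)) :
    decC g (x :: y :: L) = decC g (y :: L) + if g y < g x then 1 else 0 := by
  simp [decC, List.countP_cons]

theorem decC_le_decC_cons (g : (Fin n → Fin k) → Fin k) (x : Fin n → Fin k)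
    (L : List (Fin n → Fin k)) : decC g L ≤ decC g (x :: L) := by
  cases L with
  | nil => simp [decC]
  | cons y L => rw [decC_cons_cons]; omega

theorem decC_le_decC_filter_cons (g : (Fin n → Fin k) → Fin k) (p : (Fin n → Fin k) → Bool)
    (x : Fin n → Fin k) (L : List (Fin n → Fin k)) :
    decC g (L.filter p) ≤ decC g ((x :: L).filter p) := by
  rw [List.filter_cons]
  split
  · exact decC_le_decC_cons g x _
  · exact le_rfl

theorem IsChainE.filter {C : List (Fin n → Fin k)} (hC : IsChainE C)
    (p : (Fin n → Fin k) → Bool) : IsChainE (C.filter p) :=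
  hC.sublist List.filter_sublist

theorem decC_le_decC_filter (g f : (Fin n → Fin k) → Fin k) (p : (Fin n → Fin k) → Bool)
    (hdesc : ∀ x y, x < y → g y < g x → p x ∧ p y ∧ f y < f x) :
    ∀ C : List (Fin n → Fin k), IsChainE C → decC g C ≤ decC f (C.filter p)
  | [], _ => by simp [decC]
  | [_], _ => by simp [decC]
  | x :: y :: L, hC => by
    obtain ⟨hxy, hyL⟩ := List.isChain_cons_cons.mp hC
    have ih := decC_le_decC_filter g f p hdesc (y :: L) hyL
    rw [decC_cons_cons]
    by_cases hgxy : g y < g x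
    · obtain ⟨hpx, hpy, hfxy⟩ := hdesc x y hxy hgxy
      rw [List.filter_cons_of_pos hpy] at ih
      rw [List.filter_cons_of_pos hpx, List.filter_cons_of_pos hpy, decC_cons_cons,
        if_pos hgxy, if_pos hfxy]
      omega
    · have := decC_le_decC_filter_cons f p x (y :: L)
      rw [if_neg hgxy]
      omega

theorem dF_le_of_forall_decC_le {g : (Fin n → Fin k) → Fin k} {m : ℕ}
    (h : ∀ C, IsChainE C → decC g C ≤ m) : dF g ≤ m := by
  refine csSup_le ⟨0, [], List.isChain_nil, by simp [decC]⟩ ?_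
  rintro _ ⟨C, hC, rfl⟩
  exact h C hC

end Decrease

section Layers

variable {n k s : ℕ} {T : ℕ → Set (Fin n → Fin k)}

theorem layer_mono (hpart : ∀ x : Fin n → Fin k, ∃! i, i < s ∧ x ∈ T i)
    (hdown : ∀ i < s, ∀ α β : Fin n → Fin k, β ≤ α →
      (∃ j ≤ i, α ∈ T j) → ∃ j ≤ i, β ∈ T j)
    {x y : Fin n → Fin k} (hxy : x ≤ y) {a b : ℕ} (ha : a < s) (hb : b < s)
    (hxa : x ∈ T a) (hyb : y ∈ T b) : a ≤ b := by
  by_contra! hba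
  obtain ⟨j, hjb, hxj⟩ := hdown b hb y x hxy ⟨b, le_rfl, hyb⟩
  have : a = j := (hpart x).unique ⟨ha, hxa⟩ ⟨by omega, hxj⟩
  omega

theorem mem_layer_of_descent (hpart : ∀ x : Fin n → Fin k, ∃! i, i < s ∧ x ∈ T i)
    (hdown : ∀ i < s, ∀ α β : Fin n → Fin k, β ≤ α →
      (∃ j ≤ i, α ∈ T j) → ∃ j ≤ i, β ∈ T j)
    {f g : (Fin n → Fin k) → Fin k} {i : ℕ}
    (hg : ∀ x : Fin n → Fin k,
      ((∃ j < i, x ∈ T j) → (g x).val = 0) ∧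
      (x ∈ T i → g x = f x) ∧
      ((∃ j, i < j ∧ j < s ∧ x ∈ T j) → (g x).val = k - 1))
    {x y : Fin n → Fin k} (hxy : x < y) (hdesc : g y < g x) :
    x ∈ T i ∧ y ∈ T i ∧ f y < f x := by
  obtain ⟨a, ⟨ha, hxa⟩, -⟩ := hpart x
  obtain ⟨b, ⟨hb, hyb⟩, -⟩ := hpart y
  have hab := layer_mono hpart hdown hxy.le ha hb hxa hyb
  have hval : (g y).val < (g x).val := hdesc
  have hia : i ≤ a := by
    by_contra! hai
    have := (hg x).1 ⟨a, hai, hxa⟩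
    omega
  have hbi : b ≤ i := by
    by_contra! hib
    have := (hg y).2.2 ⟨b, hib, hb, hyb⟩
    have := (g x).isLt
    omega
  obtain rfl : a = i := by omega
  obtain rfl : b = a := by omega
  refine ⟨hxa, hyb, ?_⟩
  rwa [(hg x).2.1 hxa, (hg y).2.1 hyb] at hdesc

end Layers

theorem stmt18_general {n k s t : ℕ}
    (f : (Fin n → Fin k) → Fin k)
    (T : ℕ → Set (Fin n → Fin k))
    (hpart : ∀ x : Fin n → Fin k, ∃! i, i < s ∧ x ∈ T i)
    (hdown : ∀ i < s, ∀ α β : Fin n → Fin k, β ≤ α →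
      (∃ j ≤ i, α ∈ T j) → ∃ j ≤ i, β ∈ T j)
    (hchain : ∀ i < s, ∀ C : List (Fin n → Fin k), IsChainE C →
      (∀ β ∈ C, β ∈ T i) → decC f C < t)
    (fi : ℕ → (Fin n → Fin k) → Fin k)
    (hfi : ∀ i < s, ∀ x : Fin n → Fin k,
      ((∃ j < i, x ∈ T j) → (fi i x).val = 0) ∧
      (x ∈ T i → fi i x = f x) ∧
      ((∃ j, i < j ∧ j < s ∧ x ∈ T j) → (fi i x).val = k - 1)) :
    ∀ i < s, dF (fi i) ≤ t - 1 := by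
  classical
  intro i hi
  let p : (Fin n → Fin k) → Bool := fun x => decide (x ∈ T i)
  have hdesc : ∀ x y, x < y → fi i y < fi i x → p x ∧ p y ∧ f y < f x := by
    intro x y hxy hfxy
    simpa [p] using mem_layer_of_descent hpart hdown (hfi i hi) hxy hfxy
  refine dF_le_of_forall_decC_le fun C hC => ?_
  have hle := decC_le_decC_filter (fi i) f p hdesc C hC
  have hlt := hchain i hi (C.filter p) (hC.filter p) fun β hβ => by
    simpa [p] using (List.mem_filter.mp hβ).2
  omega

/-- If `T 0, ..., T (s-1)` partition `E_k^n` with each cumulative union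
    `T 0 ∪ ... ∪ T i` a down-set, and every chain inside a single layer has
    decrease of `f` less than `t`, then each modified function `fᵢ`
    (equal to `0` below layer `i`, to `f` on layer `i`, and to `k-1` above)
    satisfies `d(fᵢ) ≤ t - 1`. -/
theorem stmt18 {n k s t : ℕ} (hk : 2 ≤ k) (hs : 1 ≤ s) (ht : 1 ≤ t)
    (f : (Fin n → Fin k) → Fin k)
    (T : ℕ → Set (Fin n → Fin k))
    (hpart : ∀ x : Fin n → Fin k, ∃! i, i < s ∧ x ∈ T i)
    (hdown : ∀ i < s, ∀ α β : Fin n → Fin k, β ≤ α →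
      (∃ j ≤ i, α ∈ T j) → ∃ j ≤ i, β ∈ T j)
    (hchain : ∀ i < s, ∀ C : List (Fin n → Fin k), IsChainE C →
      (∀ β ∈ C, β ∈ T i) → decC f C < t)
    (fi : ℕ → (Fin n → Fin k) → Fin k)
    (hfi : ∀ i < s, ∀ x : Fin n → Fin k,
      ((∃ j < i, x ∈ T j) → (fi i x).val = 0) ∧
      (x ∈ T i → fi i x = f x) ∧
      ((∃ j, i < j ∧ j < s ∧ x ∈ T j) → (fi i x).val = k - 1)) :
    ∀ i < s, dF (fi i) ≤ t - 1 :=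
  stmt18_general f T hpart hdown hchain fi hfi
end
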